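/- Let 0 < φ_1 < φ_2 < π/2 and G a point at distance ρ_G > 0 from the origin. Every point V on the segment from G to G_F = (ρ_G sin φ_1/sin φ_2, ψ_G + φ_2 − φ_1) satisfies |V| ≤ ρ_G, i.e. in the Side case the forward straight-reachable set boundary chord S_{G_F} lies inside the closed disk of radius ρ_G centered at the origin. -/

import Mathlib

/-! Both endpoints lie in the closed disk of radius `ρ_G` (for `G_F` because `sin` is increasing
on `[0, π/2]`), and the disk is convex. -/

noncomputable def toC (ρ ψ : ℝ) : ℂ := (ρ : ℂ) * Complex.exp (ψ * Complex.I)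

open Real

theorem norm_toC (ρ ψ : ℝ) : ‖toC ρ ψ‖ = |ρ| := by
  simp [toC, Complex.norm_exp]

theorem toC_mem_closedBall {ρ r : ℝ} (ψ : ℝ) (h : |ρ| ≤ r) :
    toC ρ ψ ∈ Metric.closedBall (0 : ℂ) r := by
  rwa [mem_closedBall_zero_iff, norm_toC]

theorem abs_sin_div_sin_le_one {x y : ℝ} (hx : 0 ≤ x) (hxy : x ≤ y) (hy : y ≤ π / 2) :
    |sin x / sin y| ≤ 1 := by
  have hsin_x : 0 ≤ sin x := sin_nonneg_of_nonneg_of_le_pi hx (by linarith [pi_pos])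
  have hsin_le : sin x ≤ sin y := sin_le_sin_of_le_of_le_pi_div_two (by linarith [pi_pos]) hy hxy
  rw [abs_of_nonneg (div_nonneg hsin_x (hsin_x.trans hsin_le))]
  exact div_le_one_of_le₀ hsin_le (hsin_x.trans hsin_le)

/-- Side case: every point `V` on the chord from `G` to
`G_F = (ρ_G sin φ₁ / sin φ₂, ψ_G + φ₂ - φ₁)` lies in the closed disk of radius
`ρ_G` centered at the origin. -/
theorem stmt13 (φ₁ φ₂ ρG ψG : ℝ)
    (h1 : 0 < φ₁) (h12 : φ₁ < φ₂) (h2 : φ₂ < Real.pi / 2) (hρ : 0 < ρG) :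
    ∀ V ∈ segment ℝ (toC ρG ψG)
        (toC (ρG * Real.sin φ₁ / Real.sin φ₂) (ψG + (φ₂ - φ₁))),
      ‖V‖ ≤ ρG := by
  intro V hV
  have hG : toC ρG ψG ∈ Metric.closedBall (0 : ℂ) ρG :=
    toC_mem_closedBall ψG (abs_of_pos hρ).le
  have hGF : toC (ρG * sin φ₁ / sin φ₂) (ψG + (φ₂ - φ₁)) ∈ Metric.closedBall (0 : ℂ) ρG := by
    refine toC_mem_closedBall _ ?_
    rw [mul_div_assoc, abs_mul, abs_of_pos hρ]
    exact mul_le_of_le_one_right hρ.le (abs_sin_div_sin_le_one h1.le h12.le h2.le)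
  simpa using (convex_closedBall (0 : ℂ) ρG).segment_subset hG hGF hV
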